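/- If f ∈ K{{x}} is homogeneous of degree n (i.e. supported on monomials S with deg_x(S) = n), then (x d/dx)(f) = n · f, where (x d/dx) = φ_{(x,x)} ∘ d. -/

import Mathlib

namespace Planar

inductive PVar : Type
  | vx : PVar
  | vy : PVar
deriving DecidableEq

/-- A finite planar reduced rooted tree: every internal vertex has at least two
(ordered) children, encoded as `node t₁ t₂ rest` with children list `t₁ :: t₂ :: rest`;
leaves are labeled by a variable (an isomorphism class of such a labeled tree is
faithfully represented by this inductive data). -/
inductive PTree : Type
  | leaf : PVar → PTree
  | node : PTree → PTree → List PTree → PTree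

namespace PTree

/-- The number of leaves carrying the label `v`. -/
def countLeaf (v : PVar) : PTree → ℕ
  | .leaf w => if w = v then 1 else 0
  | .node t1 t2 rest =>
      countLeaf v t1 + countLeaf v t2 + (rest.attach.map fun t => countLeaf v t.1).sum
decreasing_by
  all_goals simp_wf
  · omega
  · omega
  · have := List.sizeOf_lt_of_mem t.2
    omega

end PTree

/-- `P'(x,y)`: planar monomials plus the empty tree `1_P` (= `none`). -/
abbrev PT := Option PTree

/-- `deg_x`: the number of leaves labeled `x`. -/
def degx (S : PT) : ℕ := S.elim 0 (PTree.countLeaf .vx)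

/-- `deg_y`: the number of leaves labeled `y`. -/
def degy (S : PT) : ℕ := S.elim 0 (PTree.countLeaf .vy)

/-- `m`-ary grafting `•_m` on `P'(x,y)` (`m = l.length`): join the non-trivial entries
at a new root; the conventions `•_m(1_P,…,1_P) = 1_P`, dropping of `1_P`-entries and
`•_2(S,1_P) = •_2(1_P,S) = S` amount to discarding the `1_P`-entries first. -/
def graft (l : List PT) : PT :=
  match l.reduceOption with
  | [] => none
  | [t] => some t
  | t1 :: t2 :: ts => some (.node t1 t2 ts)

variable (K : Type) [Field K]

/-- The algebra `K{{x,y}` of planar power series in `x` and polynomials in `y`: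
functions on `P'(x,y)` such that for every `n` only finitely many monomials of
`x`-degree `n` have a nonzero coefficient. -/
def PSer : Type := {f : PT → K // ∀ n : ℕ, {S : PT | f S ≠ 0 ∧ degx S = n}.Finite}

variable {K}

namespace PSer

private lemma finite_add (f g : PSer K) (n : ℕ) :
    {S : PT | f.1 S + g.1 S ≠ 0 ∧ degx S = n}.Finite := by
  apply ((f.2 n).union (g.2 n)).subset
  rintro S ⟨hne, hdeg⟩
  by_cases h1 : f.1 S = 0
  · exact Or.inr ⟨by simpa [h1] using hne, hdeg⟩
  · exact Or.inl ⟨h1, hdeg⟩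

private lemma finite_neg (f : PSer K) (n : ℕ) :
    {S : PT | -f.1 S ≠ 0 ∧ degx S = n}.Finite := by
  apply (f.2 n).subset
  rintro S ⟨hne, hdeg⟩
  exact ⟨by simpa using hne, hdeg⟩

private lemma finite_zero (n : ℕ) :
    {S : PT | (0 : K) ≠ 0 ∧ degx S = n}.Finite := by
  convert Set.finite_empty using 1
  ext S; simp

private lemma finite_smul (a : K) (f : PSer K) (n : ℕ) :
    {S : PT | a * f.1 S ≠ 0 ∧ degx S = n}.Finite := by
  apply (f.2 n).subset
  rintro S ⟨hne, hdeg⟩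
  exact ⟨fun h => hne (by simp [h]), hdeg⟩

noncomputable instance : AddCommGroup (PSer K) where
  add f g := ⟨fun S => f.1 S + g.1 S, finite_add f g⟩
  zero := ⟨fun _ => 0, finite_zero⟩
  neg f := ⟨fun S => -f.1 S, finite_neg f⟩
  add_assoc f g h := Subtype.ext (funext fun S => add_assoc _ _ _)
  add_comm f g := Subtype.ext (funext fun S => add_comm _ _)
  zero_add f := Subtype.ext (funext fun S => zero_add _)
  add_zero f := Subtype.ext (funext fun S => add_zero _)
  neg_add_cancel f := Subtype.ext (funext fun S => neg_add_cancel _)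
  nsmul n f := ⟨fun S => (n : K) * f.1 S, finite_smul _ f⟩
  nsmul_zero f := Subtype.ext (funext fun S => by
    show ((0 : ℕ) : K) * f.1 S = (0 : K); simp)
  nsmul_succ n f := Subtype.ext (funext fun S => by
    show ((n + 1 : ℕ) : K) * f.1 S = (n : K) * f.1 S + f.1 S; push_cast; ring)
  zsmul n f := ⟨fun S => (n : K) * f.1 S, finite_smul _ f⟩
  zsmul_zero' f := Subtype.ext (funext fun S => by
    show ((0 : ℤ) : K) * f.1 S = (0 : K); simp)
  zsmul_succ' n f := Subtype.ext (funext fun S => by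
    show ((Int.ofNat n.succ : ℤ) : K) * f.1 S = ((Int.ofNat n : ℤ) : K) * f.1 S + f.1 S
    simp only [Int.ofNat_eq_coe]; push_cast; ring)
  zsmul_neg' n f := Subtype.ext (funext fun S => by
    show ((Int.negSucc n : ℤ) : K) * f.1 S = -(((n.succ : ℤ) : K) * f.1 S)
    simp [Int.negSucc_eq]; push_cast; ring)

noncomputable instance : Module K (PSer K) where
  smul a f := ⟨fun S => a * f.1 S, finite_smul a f⟩
  one_smul f := Subtype.ext (funext fun S => one_mul _)
  mul_smul a b f := Subtype.ext (funext fun S => mul_assoc _ _ _)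
  smul_zero a := Subtype.ext (funext fun S => mul_zero _)
  smul_add a f g := Subtype.ext (funext fun S => mul_add _ _ _)
  add_smul a b f := Subtype.ext (funext fun S => add_mul _ _ _)
  zero_smul f := Subtype.ext (funext fun S => zero_mul _)

@[simp] lemma add_coeff (f g : PSer K) (S : PT) : (f + g).1 S = f.1 S + g.1 S := rfl
@[simp] lemma smul_coeff (a : K) (f : PSer K) (S : PT) : (a • f).1 S = a * f.1 S := rfl
@[simp] lemma zero_coeff (S : PT) : (0 : PSer K).1 S = 0 := rfl

end PSer

open PSer

/-- The indicator series of a single planar monomial `S ∈ P'(x,y)`. -/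
noncomputable def mono (S : PT) : PSer K := by
  classical
  refine ⟨fun T => if T = S then 1 else 0, fun n => (Set.finite_singleton S).subset ?_⟩
  rintro T ⟨h1, -⟩
  by_contra hc
  exact h1 (if_neg (by simpa [Set.mem_singleton_iff] using hc))

/-- The unit series `1_P` (the empty tree). -/
noncomputable def onePS : PSer K := mono none

/-- The series `x` (the one-vertex tree labeled `x`). -/
noncomputable def Xps : PSer K := mono (some (.leaf .vx))

/-- The series `y = dx` (the one-vertex tree labeled `y`). -/
noncomputable def Yps : PSer K := mono (some (.leaf .vy))

/-- Coefficient of the product `•_m(f₁,…,f_m)` at `S`: the (finite) sum of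
`c_{S₁}(f₁)⋯c_{S_m}(f_m)` over all decompositions `S = •_m(S₁,…,S_m)`. -/
noncomputable def bulletCoeff (fs : List (PSer K)) (S : PT) : K :=
  ∑ᶠ t ∈ {t : List PT | t.length = fs.length ∧ graft t = S},
    (List.zipWith (fun f u => f.1 u) fs t).prod

open Classical in
/-- The `m`-ary product `•_m(f₁,…,f_m)` on `K{{x,y}` (`m = fs.length`). -/
noncomputable def bullet (fs : List (PSer K)) : PSer K :=
  if h : ∀ n : ℕ, {S : PT | bulletCoeff fs S ≠ 0 ∧ degx S = n}.Finite
  then ⟨bulletCoeff fs, h⟩ else 0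

/-- The `x`-order `ord_x(f) ∈ ℕ ∪ {∞}`: the least `x`-degree of a monomial with
nonzero coefficient (`∞` for `f = 0`). -/
noncomputable def ordx (f : PSer K) : ℕ∞ :=
  ⨅ S ∈ {S : PT | f.1 S ≠ 0}, (degx S : ℕ∞)

/-- The `x`-adic absolute value `|f|ₓ = (1/2)^{ord_x f}` (`= 0` for `f = 0`). -/
noncomputable def normx (f : PSer K) : ℝ :=
  if ordx f = ⊤ then 0 else (2⁻¹ : ℝ) ^ (ordx f).toNat

/-- The `x`-adic distance `|f - g|ₓ`. -/
noncomputable def distx (f g : PSer K) : ℝ := normx (f - g)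

/-- A Cauchy sequence for the `x`-adic distance. -/
def IsCauchySeq (u : ℕ → PSer K) : Prop :=
  ∀ ε : ℝ, 0 < ε → ∃ N : ℕ, ∀ p q : ℕ, N ≤ p → N ≤ q → distx (u p) (u q) < ε

/-- Convergence of a sequence to `f` for the `x`-adic distance. -/
def TendstoSeq (u : ℕ → PSer K) (f : PSer K) : Prop :=
  ∀ ε : ℝ, 0 < ε → ∃ N : ℕ, ∀ p : ℕ, N ≤ p → distx (u p) f < ε

/-- Continuity of a map between two spaces equipped with distance functions. -/
def ContWrt {α β : Type*} (dα : α → α → ℝ) (dβ : β → β → ℝ) (φ : α → β) : Prop :=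
  ∀ a : α, ∀ ε : ℝ, 0 < ε → ∃ δ : ℝ, 0 < δ ∧ ∀ b : α, dα b a < δ → dβ (φ b) (φ a) < ε

/-- The property of being supported on monomials all of whose leaves are labeled `x`. -/
def OnlyX (f : PSer K) : Prop := ∀ S : PT, f.1 S ≠ 0 → degy S = 0

variable (K) in
/-- `K{{x}}`, the closed unital subalgebra of `K{{x,y}` generated by `x`, as a
submodule: the series supported on `1_P` and trees all of whose leaves are labeled `x`. -/
noncomputable def kxSub : Submodule K (PSer K) where
  carrier := {f | OnlyX f}
  add_mem' := by
    intro f g hf hg S hS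
    by_cases h1 : f.1 S = 0
    · exact hg S (by simpa [h1] using hS)
    · exact hf S h1
  zero_mem' := by intro S hS; simp at hS
  smul_mem' := by
    intro a f hf S hS
    exact hf S (fun h => hS (by simp [h]))

variable (K) in
/-- The space `K{{x}}` of planar power series in `x`. -/
abbrev Kx : Type _ := ↥(kxSub K)

@[simp] lemma mem_kxSub {f : PSer K} : f ∈ kxSub K ↔ OnlyX f := Iff.rfl

/-- The `x`-adic distance on `K{{x}}`. -/
noncomputable def distKx (f g : Kx K) : ℝ := distx f.1 g.1

lemma onePS_mem_kxSub : onePS ∈ kxSub (K := K) := by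
  intro S hS
  by_cases h : S = none
  · subst h; rfl
  · exact absurd (if_neg h) hS

lemma Xps_mem_kxSub : Xps ∈ kxSub (K := K) := by
  intro S hS
  by_cases h : S = some (.leaf .vx)
  · subst h; simp [degy, PTree.countLeaf]
  · exact absurd (if_neg h) hS

/-- `1_P` as an element of `K{{x}}`. -/
noncomputable def oneX : Kx K := ⟨onePS, onePS_mem_kxSub⟩

/-- `x` as an element of `K{{x}}`. -/
noncomputable def xX : Kx K := ⟨Xps, Xps_mem_kxSub⟩

open Classical in
/-- The `m`-ary product `•_m` on `K{{x}}` (`m = fs.length`). -/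
noncomputable def bulletX (fs : List (Kx K)) : Kx K :=
  if h : bullet (fs.map (fun f => f.1)) ∈ kxSub K
  then ⟨bullet (fs.map (fun f => f.1)), h⟩ else 0

open Classical in
/-- The homogeneous component of degree `n` (w.r.t. `deg_x`) of a planar power series. -/
noncomputable def comp (f : PSer K) (n : ℕ) : PSer K :=
  ⟨fun S => if degx S = n then f.1 S else 0, by
    intro m
    apply (f.2 m).subset
    rintro S ⟨h1, h2⟩
    refine ⟨?_, h2⟩
    by_cases hd : degx S = n
    · simpa [hd] using h1
    · simp [hd] at h1⟩

/-- The homogeneous component of degree `n` of an element of `K{{x}}`. -/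
noncomputable def compX (f : Kx K) (n : ℕ) : Kx K :=
  ⟨comp f.1 n, by
    intro S hS
    apply (mem_kxSub.mp f.2) S
    simp only [comp] at hS
    by_cases hd : degx S = n
    · simpa [hd] using hS
    · simp [hd] at hS⟩

/-- A substitution homomorphism `φ_{(g,h)} : K{{x,y} → K{{x,y}`: `K`-linear, compatible
with all grafting operations `•_m` (`m ≥ 2`), unital, `x ↦ g`, `y ↦ h`, and continuous
for the `x`-adic topology. -/
structure IsSubstHom (g h : PSer K) (φ : PSer K → PSer K) : Prop where
  linear : IsLinearMap K φ
  map_graft : ∀ fs : List (PSer K), 2 ≤ fs.length → φ (bullet fs) = bullet (fs.map φ)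
  map_one : φ onePS = onePS
  map_X : φ Xps = g
  map_Y : φ Yps = h
  cont : ContWrt distx distx φ

/-- A substitution homomorphism `φ_g : K{{x}} → K{{x}}` with `x ↦ g`. -/
structure IsSubstHomX (g : Kx K) (φ : Kx K → Kx K) : Prop where
  linear : IsLinearMap K φ
  map_graft : ∀ fs : List (Kx K), 2 ≤ fs.length → φ (bulletX fs) = bulletX (fs.map φ)
  map_one : φ oneX = oneX
  map_X : φ xX = g
  cont : ContWrt distKx distKx φ

/-- The universal derivation `d : K{{x}} → K{{x,y}`: continuous, `K`-linear, `d x = y`,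
and satisfying the Leibniz rule for every grafting operation `•_m` (`m ≥ 2`). -/
structure IsUDeriv (d : Kx K → PSer K) : Prop where
  linear : IsLinearMap K d
  cont : ContWrt distKx distx d
  map_X : d xX = Yps
  leibniz : ∀ fs : List (Kx K), 2 ≤ fs.length →
    d (bulletX fs) = ∑ i : Fin fs.length,
      bullet ((fs.map (fun f => f.1)).set i.1 (d (fs.get i)))

/-- The `k`-ary planar exponential series `Exp_k(x)`: constant coefficient `1`,
coefficient `1` at `x`, and `Exp_k(kx) = •_k(Exp_k(x),…,Exp_k(x))`. -/
structure IsExp (k : ℕ) (f : Kx K) : Prop where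
  coeff_one : f.1.1 none = 1
  coeff_X : f.1.1 (some (.leaf .vx)) = 1
  funEq : ∀ φ : Kx K → Kx K, IsSubstHomX ((k : K) • xX) φ →
    φ f = bulletX (List.replicate k f)

/-- `ℓ = Log_k(1+x)`, the planar logarithm attached to a planar exponential series `e`:
`ord_x ℓ ≥ 1` and `ℓ(e - 1) = x`. -/
structure IsLogOf (e ℓ : Kx K) : Prop where
  ord : 1 ≤ ordx ℓ.1
  eq : ∀ φ : Kx K → Kx K, IsSubstHomX (e - oneX) φ → φ ℓ = xX

end Planar

/-!
Since `φ ∘ d` is linear and a homogeneous `f` has finite support, it suffices to treat a single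
`x`-monomial `S`. For `S = •_m(S₁,…,S_m)` the Leibniz rule, together with the fact that `φ_{(x,x)}`
fixes every `x`-monomial, gives `φ(dS) = Σᵢ •_m(S₁,…,φ(dSᵢ),…,S_m) = Σᵢ deg_x(Sᵢ) S = deg_x(S) S`
by induction on the tree. The base cases are `φ(dx) = φ(y) = x` and `d(1_P) = 0`, the latter
because `1_P = •₂(1_P, 1_P)`.
-/

namespace Planar

namespace PTree

theorem children_induction {motive : PTree → Prop} (leaf : ∀ v, motive (.leaf v))
    (node : ∀ t₁ t₂ ts, (∀ c ∈ t₁ :: t₂ :: ts, motive c) → motive (.node t₁ t₂ ts)) :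
    ∀ t, motive t
  | .leaf v => leaf v
  | .node t₁ t₂ ts => node t₁ t₂ ts fun c _ => children_induction leaf node c
decreasing_by
  rename_i hc
  simp only [List.mem_cons] at hc
  rcases hc with rfl | rfl | hc
  · simp_wf; omega
  · simp_wf; omega
  · have := List.sizeOf_lt_of_mem hc
    simp_wf; omega

theorem countLeaf_node (v : PVar) (t₁ t₂ : PTree) (ts : List PTree) :
    countLeaf v (.node t₁ t₂ ts) = ((t₁ :: t₂ :: ts).map (countLeaf v)).sum := by
  rw [countLeaf, List.attach_map_val]
  simp [add_assoc]

theorem countLeaf_eq_zero_of_mem {v : PVar} {t₁ t₂ : PTree} {ts : List PTree}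
    (h : countLeaf v (.node t₁ t₂ ts) = 0) {c : PTree} (hc : c ∈ t₁ :: t₂ :: ts) :
    countLeaf v c = 0 := by
  rw [countLeaf_node, List.sum_eq_zero_iff] at h
  exact h _ (List.mem_map_of_mem hc)

end PTree

theorem graft_map_some (t₁ t₂ : PTree) (ts : List PTree) :
    graft ((t₁ :: t₂ :: ts).map some) = some (.node t₁ t₂ ts) := by
  simp [graft, List.reduceOption]

variable {K : Type} [Field K]

open PSer

open Classical in
theorem mono_coeff (S T : PT) : (mono (K := K) S).1 T = if T = S then 1 else 0 :=
  rfl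

theorem mono_coeff_self (S : PT) : (mono (K := K) S).1 S = 1 := by
  rw [mono_coeff, if_pos rfl]

theorem mono_coeff_of_ne {S T : PT} (h : T ≠ S) : (mono (K := K) S).1 T = 0 := by
  rw [mono_coeff, if_neg h]

theorem onlyX_mono {S : PT} (h : degy S = 0) : OnlyX (mono (K := K) S) := by
  intro T hT
  by_cases hTS : T = S
  · rwa [hTS]
  · exact absurd (mono_coeff_of_ne hTS) hT

theorem bullet_eq_of_bulletCoeff_eq {fs : List (PSer K)} {g : PSer K}
    (h : bulletCoeff fs = g.1) : bullet fs = g := by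
  have hfin : ∀ n : ℕ, {S : PT | bulletCoeff fs S ≠ 0 ∧ degx S = n}.Finite := by
    rw [h]; exact g.2
  rw [bullet]
  exact (dif_pos hfin).trans (Subtype.ext h)

open Classical in
theorem bulletCoeff_eq_ite {fs : List (PSer K)} (S : PT) (t₀ : List PT)
    (hlen : t₀.length = fs.length)
    (h : ∀ t : List PT, t.length = fs.length → graft t = S → t ≠ t₀ →
      (List.zipWith (fun f u => f.1 u) fs t).prod = 0) :
    bulletCoeff fs S =
      if graft t₀ = S then (List.zipWith (fun f u => f.1 u) fs t₀).prod else 0 := by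
  rw [bulletCoeff, finsum_mem_def, finsum_eq_single _ t₀]
  · simp only [Set.indicator_apply, Set.mem_ofPred_eq, hlen, true_and]
  · intro t ht
    simp only [Set.indicator_apply, Set.mem_ofPred_eq]
    split_ifs with hM
    exacts [h t hM.1 hM.2 ht, rfl]

theorem bullet_zipWith_smul_mono (as : List K) (Ss : List PT) (h : as.length = Ss.length) :
    bullet (List.zipWith (fun a S => a • mono S) as Ss) = as.prod • mono (K := K) (graft Ss) := by
  set gs := List.zipWith (fun a S => a • mono (K := K) S) as Ss
  have hlen : gs.length = Ss.length := by simp [gs, h]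
  have hgs : ∀ i (hi : i < Ss.length), gs[i]'(hlen ▸ hi) = as[i]'(h ▸ hi) • mono Ss[i] :=
    fun i hi => List.getElem_zipWith ..
  apply bullet_eq_of_bulletCoeff_eq
  funext T
  rw [bulletCoeff_eq_ite T Ss hlen.symm, smul_coeff, mono_coeff]
  · have hprod : List.zipWith (fun (f : PSer K) u => f.1 u) gs Ss = as := by
      apply List.ext_getElem (by simp [hlen, h])
      intro i h₁ _
      rw [List.getElem_zipWith, hgs i (by simp at h₁; omega), smul_coeff, mono_coeff_self,
        mul_one]
    by_cases hT : T = graft Ss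
    · simp [hT, hprod]
    · simp [hT, Ne.symm hT]
  · intro t ht _ hne
    obtain ⟨i, h₁, h₂, hi⟩ : ∃ i, ∃ (h₁ : i < t.length) (h₂ : i < Ss.length), t[i] ≠ Ss[i] := by
      by_contra! hall
      exact hne (List.ext_getElem (ht.trans hlen) hall)
    apply List.prod_eq_zero
    have hmem := List.getElem_mem (l := List.zipWith (fun (f : PSer K) u => f.1 u) gs t)
      (n := i) (by simp; omega)
    rwa [List.getElem_zipWith, hgs i h₂, smul_coeff, mono_coeff_of_ne hi, mul_zero] at hmem

theorem bullet_map_mono (Ss : List PT) :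
    bullet (Ss.map (mono (K := K))) = mono (graft Ss) := by
  have h := bullet_zipWith_smul_mono (K := K) (List.replicate Ss.length 1) Ss (by simp)
  have hlist : List.zipWith (fun a S => a • mono S) (List.replicate Ss.length (1 : K)) Ss =
      Ss.map (mono (K := K)) := by
    apply List.ext_getElem (by simp)
    intro i _ _
    simp
  rwa [hlist, List.prod_replicate, one_pow, one_smul] at h

theorem bullet_set_map_mono (Ss : List PT) {i : ℕ} (hi : i < Ss.length) (c : K) :
    bullet ((Ss.map mono).set i (c • mono Ss[i])) = c • mono (K := K) (graft Ss) := by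
  have h := bullet_zipWith_smul_mono (K := K) ((List.replicate Ss.length 1).set i c) Ss (by simp)
  have hprod : ((List.replicate Ss.length (1 : K)).set i c).prod = c := by
    simp [List.prod_set, hi, List.take_replicate, List.drop_replicate]
  have hlist : List.zipWith (fun a S => a • mono S) ((List.replicate Ss.length (1 : K)).set i c) Ss
      = (Ss.map (mono (K := K))).set i (c • mono Ss[i]) := by
    apply List.ext_getElem (by simp)
    intro j _ _
    rw [List.getElem_zipWith, List.getElem_set, List.getElem_set, List.getElem_replicate,
      List.getElem_map]
    split_ifs with hij
    · subst hij; rfl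
    · rw [one_smul]
  rwa [hprod, hlist] at h

theorem graft_pair_none_right (S : PT) : graft [S, none] = S := by cases S <;> rfl

theorem graft_pair_none_left (S : PT) : graft [none, S] = S := by cases S <;> rfl

theorem bullet_pair_onePS_right (g : PSer K) : bullet [g, onePS] = g := by
  apply bullet_eq_of_bulletCoeff_eq
  funext S
  rw [bulletCoeff_eq_ite S [S, none] rfl]
  · simp [graft_pair_none_right, onePS, mono_coeff_self]
  · rintro t ht hgr hne
    obtain ⟨a, b, rfl⟩ := List.length_eq_two.mp ht
    by_cases hb : b = none
    · subst hb
      rw [graft_pair_none_right] at hgr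
      exact absurd (by rw [hgr]) hne
    · simp [onePS, mono_coeff_of_ne hb]

theorem bullet_pair_onePS_left (g : PSer K) : bullet [onePS, g] = g := by
  apply bullet_eq_of_bulletCoeff_eq
  funext S
  rw [bulletCoeff_eq_ite S [none, S] rfl]
  · simp [graft_pair_none_left, onePS, mono_coeff_self]
  · rintro t ht hgr hne
    obtain ⟨a, b, rfl⟩ := List.length_eq_two.mp ht
    by_cases ha : a = none
    · subst ha
      rw [graft_pair_none_left] at hgr
      exact absurd (by rw [hgr]) hne
    · simp [onePS, mono_coeff_of_ne ha]

theorem bulletX_eq_of_bullet_eq {fs : List (Kx K)} {g : Kx K}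
    (h : bullet (fs.map Subtype.val) = g.1) : bulletX fs = g := by
  rw [bulletX, dif_pos (h ▸ g.2)]
  exact Subtype.ext h

/-- `mono S` as an element of `K{{x}}`, with junk value `0` when `S` has a `y`-leaf. -/
noncomputable def monoX (S : PT) : Kx K :=
  ⟨if degy S = 0 then mono S else 0, by
    split_ifs with h
    exacts [onlyX_mono h, (kxSub K).zero_mem]⟩

theorem coe_monoX {S : PT} (h : degy S = 0) : (monoX (K := K) S).1 = mono S :=
  if_pos h

theorem IsUDeriv.map_oneX {d : Kx K → PSer K} (hd : IsUDeriv d) : d oneX = 0 := by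
  have hone : bulletX [(oneX : Kx K), oneX] = oneX := by
    apply bulletX_eq_of_bullet_eq
    exact bullet_pair_onePS_right onePS
  have h := hd.leibniz [oneX, oneX] le_rfl
  change d (bulletX [oneX, oneX]) = ∑ i : Fin 2, _ at h
  rw [hone, Fin.sum_univ_two] at h
  change d oneX = bullet [d oneX, onePS] + bullet [onePS, d oneX] at h
  rw [bullet_pair_onePS_right, bullet_pair_onePS_left, left_eq_add] at h
  exact h

theorem IsSubstHom.map_mono_of_degy_eq_zero {φ : PSer K → PSer K} (hφ : IsSubstHom Xps Xps φ)
    {S : PT} (hS : degy S = 0) : φ (mono S) = mono S := by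
  rcases S with _ | t
  · exact hφ.map_one
  induction t using PTree.children_induction with
  | leaf v =>
    cases v
    · exact hφ.map_X
    · simp [degy, PTree.countLeaf] at hS
  | node t₁ t₂ ts ih =>
    have hc : ∀ c ∈ t₁ :: t₂ :: ts, degy (some c) = 0 :=
      fun c hc => PTree.countLeaf_eq_zero_of_mem hS hc
    rw [← graft_map_some, ← bullet_map_mono, hφ.map_graft _ (by simp), List.map_map]
    congr 1
    refine List.map_congr_left fun S hS' => ?_
    obtain ⟨c, hc', rfl⟩ := List.mem_map.mp hS'
    exact ih c hc' (hc c hc')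

theorem euler_operator_monoX {φ : PSer K → PSer K} (hφ : IsSubstHom Xps Xps φ)
    {d : Kx K → PSer K} (hd : IsUDeriv d) {S : PT} (hS : degy S = 0) :
    φ (d (monoX S)) = (degx S : K) • mono S := by
  rcases S with _ | t
  · rw [show monoX (K := K) none = oneX from Subtype.ext (coe_monoX rfl), hd.map_oneX,
      hφ.linear.map_zero]
    simp [degx]
  induction t using PTree.children_induction with
  | leaf v =>
    cases v
    · rw [show monoX (K := K) (some (.leaf .vx)) = xX from Subtype.ext (coe_monoX hS), hd.map_X,
        hφ.map_Y]
      simp [degx, PTree.countLeaf, Xps]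
    · simp [degy, PTree.countLeaf] at hS
  | node t₁ t₂ ts ih =>
    set cs := t₁ :: t₂ :: ts
    have hc : ∀ c ∈ cs, degy (some c) = 0 := fun c hc => PTree.countLeaf_eq_zero_of_mem hS hc
    set fs : List (Kx K) := cs.map (monoX ∘ some)
    have hlen : fs.length = cs.length := List.length_map _
    have hfs : fs.map Subtype.val = (cs.map some).map mono := by
      simp only [fs, List.map_map]
      exact List.map_congr_left fun c hc' => coe_monoX (hc c hc')
    have hgraft : bulletX fs = monoX (some (.node t₁ t₂ ts)) :=
      bulletX_eq_of_bullet_eq (by rw [hfs, bullet_map_mono, graft_map_some, coe_monoX hS])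
    have hterm : ∀ i : Fin fs.length,
        φ (bullet ((fs.map Subtype.val).set i (d (fs.get i)))) =
          (degx (some cs[i.1]) : K) • mono (some (.node t₁ t₂ ts)) := by
      intro i
      have hi : i.1 < cs.length := hlen ▸ i.2
      have hget : fs.get i = monoX (some cs[i.1]) := List.getElem_map ..
      have hfix : ((cs.map some).map mono).map φ = (cs.map some).map (mono (K := K)) := by
        rw [List.map_map]
        refine List.map_congr_left fun S hS' => hφ.map_mono_of_degy_eq_zero ?_
        obtain ⟨c, hc', rfl⟩ := List.mem_map.mp hS'
        exact hc c hc'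
      rw [hφ.map_graft _ (by simp [fs, cs]), List.map_set, hfs, hfix, hget,
        ih _ (List.getElem_mem hi) (hc _ (List.getElem_mem hi)), ← graft_map_some]
      have h := bullet_set_map_mono (K := K) (cs.map some) (i := i.1) (by simpa using hi)
        (degx (some cs[i.1]))
      rwa [List.getElem_map] at h
    rw [← hgraft, hd.leibniz fs (by simp [fs, cs])]
    change IsLinearMap.mk' φ hφ.linear _ = _
    rw [map_sum]
    simp only [IsLinearMap.mk'_apply, hterm, ← Finset.sum_smul]
    congr 1
    rw [degx, Option.elim, PTree.countLeaf_node, Nat.cast_list_sum, List.map_map,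
      ← Fin.sum_univ_fun_getElem, ← Fin.sum_congr' _ hlen]
    rfl

theorem PSer.sum_coeff {ι : Type*} (s : Finset ι) (g : ι → PSer K) (U : PT) :
    (∑ i ∈ s, g i).1 U = ∑ i ∈ s, (g i).1 U :=
  map_sum (⟨⟨fun g : PSer K => g.1 U, rfl⟩, fun _ _ => rfl⟩ : PSer K →+ K) g s

theorem eq_sum_smul_monoX (f : Kx K) {T : Finset PT} (hT : ∀ S, f.1.1 S ≠ 0 → S ∈ T) :
    f = ∑ S ∈ T, f.1.1 S • monoX S := by
  classical
  refine Subtype.ext (Subtype.ext (funext fun U => ?_))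
  have hterm : ∀ S ∈ T, f.1.1 S * (monoX (K := K) S).1.1 U = if U = S then f.1.1 S else 0 := by
    intro S _
    by_cases hS : f.1.1 S = 0
    · simp [hS]
    · rw [coe_monoX (f.2 S hS), mono_coeff]
      split_ifs <;> simp
  rw [Submodule.coe_sum, PSer.sum_coeff]
  simp only [Submodule.coe_smul, smul_coeff]
  rw [Finset.sum_congr rfl hterm, Finset.sum_ite_eq]
  split_ifs with hU
  · rfl
  · by_contra hne
    exact hU (hT U hne)

end Planar

open Planar in
/-- If `f ∈ K{{x}}` is homogeneous of degree `n`, then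
`(x d/dx)(f) = n · f`, where `(x d/dx) = φ_{(x,x)} ∘ d`. -/
theorem planar_euler_operator (K : Type) [Field K]
    (n : ℕ) (f : Kx K)
    (hf : ∀ S : PT, f.1.1 S ≠ 0 → degx S = n)
    (φ : PSer K → PSer K) (hφ : IsSubstHom Xps Xps φ)
    (d : Kx K → PSer K) (hd : IsUDeriv d) :
    φ (d f) = (n : K) • f.1 := by
  have hfin : {S | f.1.1 S ≠ 0}.Finite := (f.1.2 n).subset fun S hS => ⟨hS, hf S hS⟩
  let L : Kx K →ₗ[K] PSer K := (IsLinearMap.mk' φ hφ.linear).comp (IsLinearMap.mk' d hd.linear)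
  change L f = (n : K) • (kxSub K).subtype f
  rw [eq_sum_smul_monoX f (T := hfin.toFinset) fun S hS => hfin.mem_toFinset.mpr hS,
    map_sum, map_sum, Finset.smul_sum]
  refine Finset.sum_congr rfl fun S _ => ?_
  rw [map_smul, map_smul, smul_comm]
  by_cases hS : f.1.1 S = 0
  · simp [hS]
  · congr 1
    change φ (d (monoX S)) = _
    rw [euler_operator_monoX hφ hd (f.2 S hS), hf S hS, Submodule.subtype_apply,
      coe_monoX (f.2 S hS)]
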